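/- Any packing of n·m pairwise non-overlapping (possibly rotated and translated) unit squares inside the rectangle [0,n] × [0,m] must be the axis-aligned grid packing: each square equals [i,i+1] × [j,j+1] for some integers 0 ≤ i < n, 0 ≤ j < m. -/

import Mathlib

local notation "Plane" => EuclideanSpace ℝ (Fin 2)

/-- The axis-aligned closed box with `x`-range `[a₁,b₁]` and `y`-range `[a₂,b₂]`. -/
def box (a₁ b₁ a₂ b₂ : ℝ) : Set Plane :=
  {x | x 0 ∈ Set.Icc a₁ b₁ ∧ x 1 ∈ Set.Icc a₂ b₂}

/-!
The squares have disjoint interiors and total area `n * m`, the area of the rectangle, so the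
closed squares cover the open rectangle. The grid cells are then filled in lexicographic order of
(row, column). For the cell with lower-left corner `q = (i, j)`, some square `S` contains the points
`q + (t, t)` for arbitrarily small `t > 0`, hence contains `q`. The rectangle and the earlier cells
leave no room for `S` below `q`, nor to the left of `q` in the strip `j ≤ y ≤ j + 1`; as `S` is
convex of height less than `2`, it lies in the quadrant `q + [0, ∞)²`. Each edge vector of `S` then
has coordinates of equal sign, which for an orthonormal pair in `ℝ²` forces both to be axis-parallel,
so `S ⊆ q + [0, 1]²`, with equality because both have area `1`. Distinct cells are covered by
distinct squares, and counting shows that every square is a cell.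
-/

open Set Function MeasureTheory Filter Topology

namespace SquarePacking

section Box

variable (a₁ b₁ a₂ b₂ : ℝ)

lemma box_eq_inter_preimage :
    box a₁ b₁ a₂ b₂ =
      EuclideanSpace.proj (0 : Fin 2) ⁻¹' Icc a₁ b₁ ∩ EuclideanSpace.proj (1 : Fin 2) ⁻¹' Icc a₂ b₂ :=
  rfl

lemma isClosed_box : IsClosed (box a₁ b₁ a₂ b₂) :=
  (isClosed_Icc.preimage (EuclideanSpace.proj 0).continuous).inter
    (isClosed_Icc.preimage (EuclideanSpace.proj 1).continuous)

lemma convex_box : Convex ℝ (box a₁ b₁ a₂ b₂) :=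
  ((convex_Icc a₁ b₁).linear_preimage (EuclideanSpace.proj 0 : Plane →L[ℝ] ℝ).toLinearMap).inter
    ((convex_Icc a₂ b₂).linear_preimage (EuclideanSpace.proj 1 : Plane →L[ℝ] ℝ).toLinearMap)

lemma interior_box :
    interior (box a₁ b₁ a₂ b₂) = {x | x 0 ∈ Ioo a₁ b₁ ∧ x 1 ∈ Ioo a₂ b₂} := by
  have hsurj (k : Fin 2) : Surjective (EuclideanSpace.proj k : Plane →L[ℝ] ℝ) :=
    fun r => ⟨EuclideanSpace.single k r, by simp⟩
  rw [box_eq_inter_preimage, interior_inter, ContinuousLinearMap.interior_preimage _ (hsurj 0),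
    ContinuousLinearMap.interior_preimage _ (hsurj 1), interior_Icc, interior_Icc]
  rfl

lemma closure_interior_box (h₁ : a₁ < b₁) (h₂ : a₂ < b₂) :
    closure (interior (box a₁ b₁ a₂ b₂)) = box a₁ b₁ a₂ b₂ := by
  have hmid : !₂[(a₁ + b₁) / 2, (a₂ + b₂) / 2] ∈ interior (box a₁ b₁ a₂ b₂) := by
    rw [interior_box]
    simp only [mem_Ioo, mem_ofPred_eq, Matrix.cons_val_zero, Matrix.cons_val_one]
    constructor <;> constructor <;> linarith
  rw [(convex_box _ _ _ _).closure_interior_eq_closure_of_nonempty_interior ⟨_, hmid⟩,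
    (isClosed_box _ _ _ _).closure_eq]

lemma volume_box :
    volume (box a₁ b₁ a₂ b₂) = ENNReal.ofReal (b₁ - a₁) * ENNReal.ofReal (b₂ - a₂) := by
  have h : box a₁ b₁ a₂ b₂ = (MeasurableEquiv.toLp 2 (Fin 2 → ℝ)).symm ⁻¹'
      (univ.pi fun k => Icc (![a₁, a₂] k) (![b₁, b₂] k)) := by
    ext x
    simp only [box, mem_preimage, mem_univ_pi, Fin.forall_fin_two]
    simp
  rw [h, (EuclideanSpace.volume_preserving_symm_measurableEquiv_toLp (Fin 2)).measure_preimage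
      (MeasurableSet.univ_pi fun _ => measurableSet_Icc).nullMeasurableSet, volume_pi_pi]
  simp [Fin.prod_univ_two, Real.volume_Icc]

end Box

lemma box_add_one_injective : Injective fun p : ℝ × ℝ => box p.1 (p.1 + 1) p.2 (p.2 + 1) := by
  rintro ⟨a, b⟩ ⟨a', b'⟩ (h : box a (a + 1) b (b + 1) = box a' (a' + 1) b' (b' + 1))
  have h₁ : !₂[a, b] ∈ box a' (a' + 1) b' (b' + 1) := h ▸ ⟨by simp, by simp⟩
  have h₂ : !₂[a', b'] ∈ box a (a + 1) b (b + 1) := h ▸ ⟨by simp, by simp⟩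
  simp only [box, mem_Icc, mem_ofPred_eq, Matrix.cons_val_zero, Matrix.cons_val_one] at h₁ h₂
  rw [Prod.mk.injEq]
  constructor <;> linarith

section Measure

variable {X : Type*} [TopologicalSpace X] [MeasurableSpace X] {μ : Measure X} [μ.IsOpenPosMeasure]

lemma subset_of_measure_diff_eq_zero {U F : Set X} (hU : IsOpen U) (hF : IsClosed F)
    (h : μ (U \ F) = 0) : U ⊆ F :=
  sdiff_eq_empty.mp ((hU.sdiff hF).eq_empty_of_measure_zero h)

lemma eq_of_subset_of_measure_le [OpensMeasurableSpace X] {S B : Set X} (hS : IsClosed S)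
    (hB : closure (interior B) = B) (hSB : S ⊆ B) (hμ : μ B ≤ μ S) (hfin : μ S ≠ ⊤) : S = B := by
  have hnull : μ (interior B \ S) = 0 := by
    refine measure_mono_null (sdiff_subset_sdiff_left interior_subset) ?_
    rw [measure_sdiff hSB hS.measurableSet.nullMeasurableSet hfin, tsub_eq_zero_of_le hμ]
  refine hSB.antisymm ?_
  rw [← hB]
  exact closure_minimal (subset_of_measure_diff_eq_zero isOpen_interior hS hnull) hS

end Measure

lemma measurePreserving_isometryEquiv {E : Type*} [NormedAddCommGroup E] [InnerProductSpace ℝ E]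
    [FiniteDimensional ℝ E] [MeasurableSpace E] [BorelSpace E] (e : E ≃ᵢ E) :
    MeasurePreserving e volume volume := by
  have h : ⇑e = (e 0 + ·) ∘ e.toRealLinearIsometryEquiv := by
    ext1 x
    simp [IsometryEquiv.toRealLinearIsometryEquiv_apply]
  rw [h]
  exact (measurePreserving_add_left volume (e 0)).comp
    e.toRealLinearIsometryEquiv.measurePreserving

section UnitSquare

variable (e : Plane ≃ᵢ Plane)

lemma isClosed_image_box : IsClosed (e '' box 0 1 0 1) :=
  e.toHomeomorph.isClosedMap _ (isClosed_box 0 1 0 1)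

lemma convex_image_box : Convex ℝ (e '' box 0 1 0 1) :=
  (convex_box 0 1 0 1).affine_image e.toRealAffineIsometryEquiv.toAffineMap

lemma closure_interior_image_box :
    closure (interior (e '' box 0 1 0 1)) = e '' box 0 1 0 1 := by
  rw [← e.coe_toHomeomorph, ← e.toHomeomorph.image_interior, ← e.toHomeomorph.image_closure,
    closure_interior_box 0 1 0 1 one_pos one_pos]

lemma volume_image_box : volume (e '' box 0 1 0 1) = 1 := by
  rw [← e.preimage_symm, (measurePreserving_isometryEquiv e.symm).measure_preimage
    (isClosed_box 0 1 0 1).measurableSet.nullMeasurableSet, volume_box]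
  simp

lemma volume_interior_image_box : volume (interior (e '' box 0 1 0 1)) = 1 := by
  rw [measure_interior_of_null_frontier ((convex_image_box e).addHaar_frontier volume),
    volume_image_box]

lemma dist_lt_two_of_mem_box {x y : Plane} (hx : x ∈ box 0 1 0 1) (hy : y ∈ box 0 1 0 1) :
    dist x y < 2 := by
  obtain ⟨⟨hx₀, hx₀'⟩, hx₁, hx₁'⟩ := hx
  obtain ⟨⟨hy₀, hy₀'⟩, hy₁, hy₁'⟩ := hy
  rw [EuclideanSpace.dist_eq, Real.sqrt_lt' two_pos, Fin.sum_univ_two, Real.dist_eq, Real.dist_eq,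
    sq_abs, sq_abs]
  nlinarith

end UnitSquare

section Orthonormal

variable {u₀ u₁ v₀ v₁ : ℝ}

lemma mul_nonneg_of_segment_nonneg {a : ℝ}
    (hu : ∀ s ∈ Icc (0 : ℝ) 1, 0 ≤ (s - a) * u₀ ∧ 0 ≤ (s - a) * u₁) : 0 ≤ u₀ * u₁ := by
  obtain ⟨h₀, h₁⟩ := hu 0 ⟨le_rfl, zero_le_one⟩
  obtain ⟨h₀', h₁'⟩ := hu 1 ⟨zero_le_one, le_rfl⟩
  have hpos : 0 < a ^ 2 + (1 - a) ^ 2 := by nlinarith [sq_nonneg (2 * a - 1)]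
  have key : 0 ≤ (a ^ 2 + (1 - a) ^ 2) * (u₀ * u₁) := by
    nlinarith [mul_nonneg h₀ h₁, mul_nonneg h₀' h₁']
  exact (mul_nonneg_iff_of_pos_left hpos).mp key

lemma mul_eq_zero_of_orthonormal (hu : u₀ ^ 2 + u₁ ^ 2 = 1) (hv : v₀ ^ 2 + v₁ ^ 2 = 1)
    (huv : u₀ * v₀ + u₁ * v₁ = 0) (hu₀₁ : 0 ≤ u₀ * u₁) (hv₀₁ : 0 ≤ v₀ * v₁) : u₀ * v₀ = 0 := by
  -- `v = d • (-u₁, u₀)` with `d = ±1`, so the rows of the matrix `(u v)` are orthogonal as well.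
  set d := u₀ * v₁ - u₁ * v₀
  have hd : d ^ 2 = 1 := by
    linear_combination (v₀ ^ 2 + v₁ ^ 2) * hu + hv - (u₀ * v₀ + u₁ * v₁) * huv
  have hv₀ : v₀ = -d * u₁ := by linear_combination (-v₀) * hu + u₀ * huv
  have hv₁ : v₁ = d * u₀ := by linear_combination (-v₁) * hu + u₁ * huv
  have hrows : u₀ * u₁ + v₀ * v₁ = 0 := by
    rw [hv₀, hv₁]
    linear_combination (-u₀ * u₁) * hd
  have hsq : (u₀ * v₀) ^ 2 = 0 := by nlinarith
  exact pow_eq_zero_iff two_ne_zero |>.mp hsq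

lemma sub_mul_add_sub_mul_le_one {a b s t : ℝ} (ha : a ∈ Icc (0 : ℝ) 1) (hb : b ∈ Icc (0 : ℝ) 1)
    (hs : s ∈ Icc (0 : ℝ) 1) (ht : t ∈ Icc (0 : ℝ) 1) (hu : u₀ ^ 2 ≤ 1) (hv : v₀ ^ 2 ≤ 1)
    (huv : u₀ * v₀ = 0) : (s - a) * u₀ + (t - b) * v₀ ≤ 1 := by
  obtain ⟨ha₀, ha₁⟩ := ha; obtain ⟨hb₀, hb₁⟩ := hb; obtain ⟨hs₀, hs₁⟩ := hs; obtain ⟨ht₀, ht₁⟩ := ht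
  rcases mul_eq_zero.mp huv with h | h <;> rw [h]
  · nlinarith [sq_nonneg (t - b - v₀), mul_nonneg (by linarith : 0 ≤ 1 - t + b)
      (by linarith : 0 ≤ 1 + t - b)]
  · nlinarith [sq_nonneg (s - a - u₀), mul_nonneg (by linarith : 0 ≤ 1 - s + a)
      (by linarith : 0 ≤ 1 + s - a)]

end Orthonormal

lemma apply_zero_le_of_convex {S : Set Plane} (hS : Convex ℝ S) {q : Plane} (hq : q ∈ S)
    (hheight : ∀ p ∈ S, p 1 < q 1 + 2)
    (hL : ∀ p ∈ S, q 1 ≤ p 1 ∧ (q 0 ≤ p 0 ∨ q 1 + 1 ≤ p 1)) (p : Plane) (hp : p ∈ S) :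
    q 0 ≤ p 0 := by
  have hmid := hS hq hp (by norm_num : (0 : ℝ) ≤ 1 / 2) (by norm_num : (0 : ℝ) ≤ 1 / 2) (by norm_num)
  obtain ⟨-, h | h⟩ := hL _ hmid <;> simp only [PiLp.add_apply, PiLp.smul_apply, smul_eq_mul] at h
  · linarith
  · linarith [hheight p hp]

section Corner

variable (e : Plane ≃ᵢ Plane)

lemma image_box_subset_box_of_subset_quadrant {x₀ : Plane} (hx₀ : x₀ ∈ box 0 1 0 1)
    (hQ : ∀ x ∈ box 0 1 0 1, e x₀ 0 ≤ e x 0 ∧ e x₀ 1 ≤ e x 1) :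
    e '' box 0 1 0 1 ⊆ box (e x₀ 0) (e x₀ 0 + 1) (e x₀ 1) (e x₀ 1 + 1) := by
  set A := e.toRealLinearIsometryEquiv
  set u := A !₂[1, 0]
  set v := A !₂[0, 1]
  have hcoord (x : Plane) (k : Fin 2) :
      e x k = e x₀ k + (x 0 - x₀ 0) * u k + (x 1 - x₀ 1) * v k := by
    have hx : x - x₀ = (x 0 - x₀ 0) • !₂[1, 0] + (x 1 - x₀ 1) • !₂[0, 1] := by
      ext k; fin_cases k <;> simp
    have h := congrArg (fun w => A w k) hx
    simp only [map_sub, map_add, map_smul, A, IsometryEquiv.toRealLinearIsometryEquiv_apply,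
      PiLp.sub_apply, PiLp.add_apply, PiLp.smul_apply, smul_eq_mul] at h
    simp only [u, v, A, IsometryEquiv.toRealLinearIsometryEquiv_apply, PiLp.sub_apply]
    linarith
  have hnorm (w : Plane) (hw : ‖A w‖ = 1) : A w 0 ^ 2 + A w 1 ^ 2 = 1 := by
    rw [← Fin.sum_univ_two (fun k => A w k ^ 2), ← EuclideanSpace.real_norm_sq_eq, hw, one_pow]
  have hu : u 0 ^ 2 + u 1 ^ 2 = 1 := hnorm _ (by simp [A.norm_map, EuclideanSpace.norm_eq])
  have hv : v 0 ^ 2 + v 1 ^ 2 = 1 := hnorm _ (by simp [A.norm_map, EuclideanSpace.norm_eq])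
  have huv : u 0 * v 0 + u 1 * v 1 = 0 := by
    have h : inner ℝ u v = inner ℝ (!₂[1, 0] : Plane) !₂[0, 1] := A.inner_map_map _ _
    simp only [PiLp.inner_apply, Fin.sum_univ_two] at h
    simpa [mul_comm] using h
  have hseg_u : ∀ s ∈ Icc (0 : ℝ) 1, 0 ≤ (s - x₀ 0) * u 0 ∧ 0 ≤ (s - x₀ 0) * u 1 := by
    intro s hs
    have h := hQ !₂[s, x₀ 1] ⟨by simpa using hs, by simpa using hx₀.2⟩
    rw [hcoord !₂[s, x₀ 1] 0, hcoord !₂[s, x₀ 1] 1] at h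
    simpa using h
  have hseg_v : ∀ t ∈ Icc (0 : ℝ) 1, 0 ≤ (t - x₀ 1) * v 0 ∧ 0 ≤ (t - x₀ 1) * v 1 := by
    intro t ht
    have h := hQ !₂[x₀ 0, t] ⟨by simpa using hx₀.1, by simpa using ht⟩
    rw [hcoord !₂[x₀ 0, t] 0, hcoord !₂[x₀ 0, t] 1] at h
    simpa using h
  have hu₀₁ := mul_nonneg_of_segment_nonneg hseg_u
  have hv₀₁ := mul_nonneg_of_segment_nonneg hseg_v
  have h₀ : u 0 * v 0 = 0 := mul_eq_zero_of_orthonormal hu hv huv hu₀₁ hv₀₁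
  have h₁ : u 1 * v 1 = 0 :=
    mul_eq_zero_of_orthonormal (u₀ := u 1) (u₁ := u 0) (v₀ := v 1) (v₁ := v 0) (by linarith)
      (by linarith) (by linarith) (by rwa [mul_comm]) (by rwa [mul_comm])
  rintro _ ⟨x, hx, rfl⟩
  obtain ⟨hQ₀, hQ₁⟩ := hQ x hx
  refine ⟨⟨hQ₀, ?_⟩, hQ₁, ?_⟩
  · rw [hcoord x 0]
    linarith [sub_mul_add_sub_mul_le_one hx₀.1 hx₀.2 hx.1 hx.2
      (by nlinarith [sq_nonneg (u 1)]) (by nlinarith [sq_nonneg (v 1)]) h₀]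
  · rw [hcoord x 1]
    linarith [sub_mul_add_sub_mul_le_one hx₀.1 hx₀.2 hx.1 hx.2
      (by nlinarith [sq_nonneg (u 0)]) (by nlinarith [sq_nonneg (v 0)]) h₁]

lemma image_box_eq_box_of_subset_quadrant {x₀ : Plane} (hx₀ : x₀ ∈ box 0 1 0 1)
    (hQ : ∀ x ∈ box 0 1 0 1, e x₀ 0 ≤ e x 0 ∧ e x₀ 1 ≤ e x 1) :
    e '' box 0 1 0 1 = box (e x₀ 0) (e x₀ 0 + 1) (e x₀ 1) (e x₀ 1 + 1) :=
  eq_of_subset_of_measure_le (isClosed_image_box e)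
    (closure_interior_box _ _ _ _ (lt_add_one _) (lt_add_one _))
    (image_box_subset_box_of_subset_quadrant e hx₀ hQ)
    (by rw [volume_box, volume_image_box]; simp) (by simp [volume_image_box])

end Corner

lemma exists_nat_mem_Icc {x : ℝ} {N : ℕ} (hN : 0 < N) (hx : x ∈ Icc (0 : ℝ) N) :
    ∃ k < N, x ∈ Icc (k : ℝ) (k + 1) := by
  refine ⟨min ⌊x⌋₊ (N - 1), by omega, ?_, ?_⟩
  · exact (Nat.cast_le.mpr (min_le_left _ _)).trans (Nat.floor_le hx.1)
  · rcases le_total ⌊x⌋₊ (N - 1) with h | h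
    · rw [min_eq_left h]
      exact (Nat.lt_floor_add_one x).le
    · rw [min_eq_right h]
      have hN' : N - 1 + 1 = N := by omega
      calc x ≤ N := hx.2
        _ = ((N - 1 : ℕ) : ℝ) + 1 := by exact_mod_cast hN'.symm

lemma exists_cell_lt_of_mem {n i j : ℕ} (hi : i < n) {p : Plane} (hp₀ : p 0 ∈ Icc (0 : ℝ) n)
    (hp₁ : 0 ≤ p 1) (h : (j : ℝ) ≤ p 1 → p 0 < i ∧ p 1 < j + 1) :
    ∃ i' j' : ℕ, i' < n ∧ toLex (j', i') < toLex (j, i) ∧ p ∈ box i' (i' + 1) j' (j' + 1) := by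
  rcases lt_or_ge (p 1) j with hj | hj
  · obtain ⟨i', hi', hx⟩ := exists_nat_mem_Icc (Nat.zero_lt_of_lt hi) hp₀
    obtain ⟨j', hj', hy⟩ := exists_nat_mem_Icc (N := j) (Nat.cast_pos.mp (hp₁.trans_lt hj))
      ⟨hp₁, hj.le⟩
    exact ⟨i', j', hi', Prod.Lex.toLex_lt_toLex.mpr (Or.inl hj'), hx, hy⟩
  · obtain ⟨hx, hy⟩ := h hj
    obtain ⟨i', hi', hx'⟩ := exists_nat_mem_Icc (N := i) (Nat.cast_pos.mp (hp₀.1.trans_lt hx))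
      ⟨hp₀.1, hx.le⟩
    exact ⟨i', j, hi'.trans hi, Prod.Lex.toLex_lt_toLex.mpr (Or.inr ⟨rfl, hi'⟩), hx', hj, hy.le⟩

lemma image_box_eq_cell {n m i j : ℕ} (hi : i < n) (e : Plane ≃ᵢ Plane)
    (hsub : e '' box 0 1 0 1 ⊆ box 0 n 0 m) (hcorner : !₂[(i : ℝ), j] ∈ e '' box 0 1 0 1)
    (hprev : ∀ i' j' : ℕ, i' < n → toLex (j', i') < toLex (j, i) →
      Disjoint (interior (e '' box 0 1 0 1)) (interior (box i' (i' + 1) j' (j' + 1)))) :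
    e '' box 0 1 0 1 = box i (i + 1) j (j + 1) := by
  have hcont (k : Fin 2) : Continuous fun p : Plane => p k := by fun_prop
  have hL : ∀ p ∈ e '' box 0 1 0 1, (j : ℝ) ≤ p 1 ∧ ((i : ℝ) ≤ p 0 ∨ (j : ℝ) + 1 ≤ p 1) := by
    rw [← closure_interior_image_box e]
    refine closure_minimal (fun p hp => show _ ∧ _ from ?_) ?_
    · by_contra! hT
      have hp' := hsub (interior_subset hp)
      obtain ⟨i', j', hi', hlt, hcell⟩ := exists_cell_lt_of_mem hi hp'.1 hp'.2.1 hT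
      have hdisj := (hprev i' j' hi' hlt).closure_right isOpen_interior
      rw [closure_interior_box _ _ _ _ (lt_add_one _) (lt_add_one _)] at hdisj
      exact hdisj.notMem_of_mem_left hp hcell
    · exact (isClosed_le continuous_const (hcont 1)).inter
        ((isClosed_le continuous_const (hcont 0)).union (isClosed_le continuous_const (hcont 1)))
  obtain ⟨x₀, hx₀, hx₀q⟩ := hcorner
  have hq₀ : e x₀ 0 = i := by simp [hx₀q]
  have hq₁ : e x₀ 1 = j := by simp [hx₀q]
  have hheight : ∀ p ∈ e '' box 0 1 0 1, p 1 < e x₀ 1 + 2 := by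
    rintro _ ⟨x, hx, rfl⟩
    have h := PiLp.norm_apply_le (e x - e x₀) 1
    rw [← dist_eq_norm, e.dist_eq, PiLp.sub_apply, Real.norm_eq_abs] at h
    linarith [le_abs_self (e x 1 - e x₀ 1), dist_lt_two_of_mem_box hx hx₀]
  have hQ := apply_zero_le_of_convex (convex_image_box e) (mem_image_of_mem e hx₀) hheight
    (by rw [hq₀, hq₁]; exact hL)
  have h := image_box_eq_box_of_subset_quadrant e hx₀ fun x hx =>
    ⟨hQ _ (mem_image_of_mem e hx), hq₁ ▸ (hL _ (mem_image_of_mem e hx)).1⟩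
  rwa [hq₀, hq₁] at h

section Packing

variable {ι : Type*} [Fintype ι] {n m : ℕ} (f : ι → Plane ≃ᵢ Plane)

lemma interior_box_subset_iUnion (hcard : Fintype.card ι = n * m)
    (hsub : ∀ a, f a '' box 0 1 0 1 ⊆ box 0 n 0 m)
    (hdisj : Pairwise (Disjoint on fun a => interior (f a '' box 0 1 0 1))) :
    interior (box 0 n 0 m) ⊆ ⋃ a, f a '' box 0 1 0 1 := by
  refine subset_of_measure_diff_eq_zero (μ := volume) isOpen_interior
    (isClosed_iUnion_of_finite fun a => isClosed_image_box (f a)) ?_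
  have hunion : volume (⋃ a, interior (f a '' box 0 1 0 1)) = n * m := by
    rw [measure_iUnion hdisj fun _ => measurableSet_interior]
    simp [volume_interior_image_box, hcard]
  have hrect : volume (box (0 : ℝ) n 0 m) = n * m := by
    simp [volume_box]
  refine measure_mono_null
    (sdiff_subset_sdiff interior_subset (iUnion_mono fun _ => interior_subset)) ?_
  rw [measure_sdiff (iUnion_subset fun a => interior_subset.trans (hsub a))
    (MeasurableSet.iUnion fun _ => measurableSet_interior).nullMeasurableSet
    (by simp [hunion, ENNReal.mul_eq_top]), hrect, hunion, tsub_self]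

lemma exists_frequently_mem (hcover : interior (box 0 n 0 m) ⊆ ⋃ a, f a '' box 0 1 0 1)
    {i j : ℕ} (hi : i < n) (hj : j < m) :
    ∃ a, ∃ᶠ t in 𝓝[>] (0 : ℝ), !₂[(i : ℝ), j] + t • !₂[1, 1] ∈ f a '' box 0 1 0 1 := by
  rw [← frequently_exists]
  refine Eventually.frequently ?_
  filter_upwards [Ioo_mem_nhdsGT one_pos] with t ⟨ht₀, ht₁⟩
  have hi' : (i : ℝ) + 1 ≤ n := by exact_mod_cast hi
  have hj' : (j : ℝ) + 1 ≤ m := by exact_mod_cast hj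
  refine mem_iUnion.mp (hcover ?_)
  rw [interior_box]
  simp only [mem_Ioo, mem_ofPred_eq, PiLp.add_apply, PiLp.smul_apply, smul_eq_mul, mul_one,
    Matrix.cons_val_zero, Matrix.cons_val_one]
  have := i.cast_nonneg (α := ℝ)
  have := j.cast_nonneg (α := ℝ)
  refine ⟨⟨?_, ?_⟩, ?_, ?_⟩ <;> linarith

lemma add_smul_notMem_box_of_lt {i j i' j' : ℕ} (hlt : toLex (j', i') < toLex (j, i)) {t : ℝ}
    (ht : 0 < t) : !₂[(i : ℝ), j] + t • !₂[1, 1] ∉ box i' (i' + 1) j' (j' + 1) := by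
  rintro ⟨⟨-, hx⟩, -, hy⟩
  simp only [PiLp.add_apply, PiLp.smul_apply, smul_eq_mul, mul_one, Matrix.cons_val_zero,
    Matrix.cons_val_one] at hx hy
  rcases Prod.Lex.toLex_lt_toLex.mp hlt with h | ⟨h, h'⟩
  · have : (j' : ℝ) + 1 ≤ j := by exact_mod_cast h
    linarith
  · have : (i' : ℝ) + 1 ≤ i := by exact_mod_cast h'
    linarith

lemma exists_eq_cell (hcard : Fintype.card ι = n * m)
    (hsub : ∀ a, f a '' box 0 1 0 1 ⊆ box 0 n 0 m)
    (hdisj : Pairwise (Disjoint on fun a => interior (f a '' box 0 1 0 1)))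
    {i j : ℕ} (hi : i < n) (hj : j < m) : ∃ a, f a '' box 0 1 0 1 = box i (i + 1) j (j + 1) := by
  have hcover := interior_box_subset_iUnion f hcard hsub hdisj
  induction h : toLex (j, i) using WellFoundedLT.induction generalizing i j with
  | _ c ih =>
    subst h
    obtain ⟨a, ha⟩ := exists_frequently_mem f hcover hi hj
    have hlim : Tendsto (fun t : ℝ => !₂[(i : ℝ), j] + t • !₂[1, 1]) (𝓝[>] 0)
        (𝓝 !₂[(i : ℝ), j]) := by
      have hcont : Continuous fun t : ℝ => !₂[(i : ℝ), j] + t • !₂[1, 1] := by fun_prop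
      simpa using (hcont.tendsto 0).mono_left nhdsWithin_le_nhds
    have hcorner := (isClosed_image_box (f a)).mem_of_frequently_of_tendsto ha hlim
    obtain ⟨t, hta, ht⟩ := (ha.and_eventually (Ioo_mem_nhdsGT one_pos)).exists
    refine ⟨a, image_box_eq_cell hi (f a) (hsub a) hcorner fun i' j' hi' hlt => ?_⟩
    have hj' : j' < m := by
      rcases Prod.Lex.toLex_lt_toLex.mp hlt with h | ⟨h, -⟩ <;> simp only at h <;> omega
    obtain ⟨b, hb⟩ := ih _ hlt hi' hj' rfl
    have hab : a ≠ b := by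
      rintro rfl
      exact add_smul_notMem_box_of_lt hlt ht.1 (hb ▸ hta)
    rw [← hb]
    exact hdisj hab

end Packing

end SquarePacking

theorem rotated_squares_packing_unique_general (n m : ℕ)
    (f : Fin (n * m) → (Plane ≃ᵢ Plane))
    (hsub : ∀ i, f i '' box 0 1 0 1 ⊆ box 0 n 0 m)
    (hdisj : ∀ i j, i ≠ j →
      interior (f i '' box 0 1 0 1) ∩ interior (f j '' box 0 1 0 1) = ∅) :
    ∀ i, ∃ a b : ℤ, 0 ≤ a ∧ a < n ∧ 0 ≤ b ∧ b < m ∧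
      f i '' box 0 1 0 1 = box (a : ℝ) (a + 1) (b : ℝ) (b + 1) := by
  have hdisj' : Pairwise (Disjoint on fun a => interior (f a '' box 0 1 0 1)) :=
    fun a b hab => disjoint_iff_inter_eq_empty.mpr (hdisj a b hab)
  choose σ hσ using fun c : Fin n × Fin m =>
    SquarePacking.exists_eq_cell f (Fintype.card_fin _) hsub hdisj' c.1.isLt c.2.isLt
  have hσ_inj : σ.Injective := by
    intro c d h
    have hcd := SquarePacking.box_add_one_injective (a₁ := (c.1, c.2)) (a₂ := (d.1, d.2))
      ((hσ c).symm.trans (h ▸ hσ d))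
    simp only [Prod.mk.injEq, Nat.cast_inj] at hcd
    exact Prod.ext (Fin.ext hcd.1) (Fin.ext hcd.2)
  intro k
  obtain ⟨c, rfl⟩ := ((Fintype.bijective_iff_injective_and_card σ).mpr ⟨hσ_inj, by simp⟩).2 k
  exact ⟨c.1, c.2, by positivity, by exact_mod_cast c.1.isLt, by positivity,
    by exact_mod_cast c.2.isLt, by simpa using hσ c⟩

theorem rotated_squares_packing_unique (n m : ℕ) (hn : 0 < n) (hm : 0 < m)
    (f : Fin (n * m) → (Plane ≃ᵢ Plane))
    (hsub : ∀ i, f i '' box 0 1 0 1 ⊆ box 0 n 0 m)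
    (hdisj : ∀ i j, i ≠ j →
      interior (f i '' box 0 1 0 1) ∩ interior (f j '' box 0 1 0 1) = ∅) :
    ∀ i, ∃ a b : ℤ, 0 ≤ a ∧ a < n ∧ 0 ≤ b ∧ b < m ∧
      f i '' box 0 1 0 1 = box (a : ℝ) (a + 1) (b : ℝ) (b + 1) :=
  rotated_squares_packing_unique_general n m f hsub hdisj
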